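/- arXiv:1512.08588 — 2 statements merged into one kernel-verified Lean document; each statement's English description precedes it below -/
import Mathlib

section
/- Let $M$ be a left-left Yetter-Drinfeld module over the tensor product bialgebra $H\otimes H^*$, with induced structures $h\cdot m = (h\otimes\varepsilon)\cdot m$, $m\cdot h = \langle(\varepsilon\otimes\mathrm{id})m_{[-1]},h\rangle m_{[0]}$, $\rho_L(m)=m_{(-1)}\otimes m_{(0)}=(\mathrm{id}\otimes\varepsilon^*)(m_{[-1]})\otimes m_{[0]}$, and $\rho_R(m)=m_{\langle 0\rangle}\otimes m_{\langle 1\rangle}=\sum_i(1\otimes h^i)\cdot m\otimes h_i$. Then the left-left Yetter-Drinfeld compatibility over $H$ holds: $(h_1\cdot m)_{(-1)}h_2\otimes(h_1\cdot m)_{(0)} = h_1 m_{(-1)}\otimes h_2\cdot m_{(0)}$. -/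
/- Common setup: Yetter-Drinfeld-Long bimodules over a bialgebra `H`, and
Yetter-Drinfeld modules over the tensor product bialgebra `H ⊗ H^*`. -/

open TensorProduct LinearMap Module

noncomputable section

namespace YDL

variable (k : Type) [Field k] (H : Type) [Ring H] [Bialgebra k H]
variable (M : Type) [AddCommGroup M] [Module k M]

/-- Data of an `H`-bimodule, `H`-bicomodule structure on `M`:
left action `aL`, right action `aR`, left coaction `cL`, right coaction `cR`. -/
structure LRData where
  aL : H ⊗[k] M →ₗ[k] M
  aR : M ⊗[k] H →ₗ[k] M
  cL : M →ₗ[k] H ⊗[k] M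
  cR : M →ₗ[k] M ⊗[k] H

variable {k H M}

/-- `M` is a left `H`-module. -/
structure IsLMod (D : LRData k H M) : Prop where
  one_act : ∀ m : M, D.aL (1 ⊗ₜ m) = m
  mul_act : ∀ (g h : H) (m : M), D.aL ((g * h) ⊗ₜ m) = D.aL (g ⊗ₜ D.aL (h ⊗ₜ m))

/-- `M` is a right `H`-module. -/
structure IsRMod (D : LRData k H M) : Prop where
  act_one : ∀ m : M, D.aR (m ⊗ₜ 1) = m
  act_mul : ∀ (m : M) (g h : H), D.aR (m ⊗ₜ (g * h)) = D.aR (D.aR (m ⊗ₜ g) ⊗ₜ h)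

/-- `M` is a left `H`-comodule. -/
structure IsLCom (D : LRData k H M) : Prop where
  coassoc : (TensorProduct.assoc k H H M).toLinearMap ∘ₗ map Coalgebra.comul LinearMap.id ∘ₗ D.cL
      = map LinearMap.id D.cL ∘ₗ D.cL
  counit : (TensorProduct.lid k M).toLinearMap ∘ₗ map Coalgebra.counit LinearMap.id ∘ₗ D.cL
      = LinearMap.id

/-- `M` is a right `H`-comodule. -/
structure IsRCom (D : LRData k H M) : Prop where
  coassoc : (TensorProduct.assoc k M H H).toLinearMap ∘ₗ map D.cR LinearMap.id ∘ₗ D.cR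
      = map LinearMap.id Coalgebra.comul ∘ₗ D.cR
  counit : (TensorProduct.rid k M).toLinearMap ∘ₗ map LinearMap.id Coalgebra.counit ∘ₗ D.cR
      = LinearMap.id

/-- Left-left Yetter-Drinfeld condition (1.1):
`(h₁·m)₍₋₁₎h₂ ⊗ (h₁·m)₍₀₎ = h₁m₍₋₁₎ ⊗ h₂·m₍₀₎`, as maps `H ⊗ M → H ⊗ M`. -/
def Cond1 (D : LRData k H M) : Prop :=
  map (LinearMap.mul' k H ∘ₗ (TensorProduct.comm k H H).toLinearMap) LinearMap.id ∘ₗ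
    (TensorProduct.assoc k H H M).symm.toLinearMap ∘ₗ
    map LinearMap.id (D.cL ∘ₗ D.aL) ∘ₗ
    (TensorProduct.assoc k H H M).toLinearMap ∘ₗ
    map ((TensorProduct.comm k H H).toLinearMap ∘ₗ Coalgebra.comul) LinearMap.id
  = map (LinearMap.mul' k H) D.aL ∘ₗ
    (tensorTensorTensorComm k H H H M).toLinearMap ∘ₗ map Coalgebra.comul D.cL

/-- Left-right Long condition (1.2): `(h·m)₍₀₎ ⊗ (h·m)₍₁₎ = h·m₍₀₎ ⊗ m₍₁₎`. -/
def Cond2 (D : LRData k H M) : Prop :=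
  D.cR ∘ₗ D.aL
  = map D.aL LinearMap.id ∘ₗ (TensorProduct.assoc k H M H).symm.toLinearMap ∘ₗ
      map LinearMap.id D.cR

/-- Right-right Yetter-Drinfeld condition (1.3):
`(m·h₂)₍₀₎ ⊗ h₁(m·h₂)₍₁₎ = m₍₀₎·h₁ ⊗ m₍₁₎h₂`, as maps `M ⊗ H → M ⊗ H`. -/
def Cond3 (D : LRData k H M) : Prop :=
  map LinearMap.id (LinearMap.mul' k H ∘ₗ (TensorProduct.comm k H H).toLinearMap) ∘ₗ
    (TensorProduct.assoc k M H H).toLinearMap ∘ₗ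
    map (D.cR ∘ₗ D.aR) LinearMap.id ∘ₗ
    (TensorProduct.assoc k M H H).symm.toLinearMap ∘ₗ
    map LinearMap.id ((TensorProduct.comm k H H).toLinearMap ∘ₗ Coalgebra.comul)
  = map D.aR (LinearMap.mul' k H) ∘ₗ
    (tensorTensorTensorComm k M H H H).toLinearMap ∘ₗ map D.cR Coalgebra.comul

/-- Right-left Long condition (1.4): `(m·h)₍₋₁₎ ⊗ (m·h)₍₀₎ = m₍₋₁₎ ⊗ m₍₀₎·h`. -/
def Cond4 (D : LRData k H M) : Prop :=
  D.cL ∘ₗ D.aR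
  = map LinearMap.id D.aR ∘ₗ (TensorProduct.assoc k H M H).toLinearMap ∘ₗ
      map D.cL LinearMap.id

/-- `M` with the data `D` is a Yetter-Drinfeld-Long bimodule: it is an `H`-bimodule
and an `H`-bicomodule satisfying the four compatibility conditions. -/
structure IsLR (D : LRData k H M) : Prop where
  lmod : IsLMod D
  rmod : IsRMod D
  lcom : IsLCom D
  rcom : IsRCom D
  bimod : ∀ (h h' : H) (m : M), D.aL (h ⊗ₜ D.aR (m ⊗ₜ h')) = D.aR (D.aL (h ⊗ₜ m) ⊗ₜ h')
  bicom : (TensorProduct.assoc k H M H).toLinearMap ∘ₗ map D.cL LinearMap.id ∘ₗ D.cR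
      = map LinearMap.id D.cR ∘ₗ D.cL
  cond1 : Cond1 D
  cond2 : Cond2 D
  cond3 : Cond3 D
  cond4 : Cond4 D

variable (k H M)

/-- The tensor product bialgebra `H ⊗ H^*` (as a vector space). -/
abbrev X := H ⊗[k] Module.Dual k H

/-- Convolution product on `H^*`: `⟨f*g, h⟩ = ⟨f,h₁⟩⟨g,h₂⟩`. -/
def convL : Module.Dual k H ⊗[k] Module.Dual k H →ₗ[k] Module.Dual k H :=
  (Coalgebra.comul (R := k) (A := H)).dualMap ∘ₗ TensorProduct.dualDistrib k H H

/-- Counit of `H^*`: evaluation at `1`. -/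
def εD : Module.Dual k H →ₗ[k] k := LinearMap.applyₗ (1 : H)

/-- Multiplication of the tensor product bialgebra `H ⊗ H^*`. -/
def μX : X k H ⊗[k] X k H →ₗ[k] X k H :=
  map (LinearMap.mul' k H) (convL k H) ∘ₗ
    (tensorTensorTensorComm k H (Module.Dual k H) H (Module.Dual k H)).toLinearMap

/-- Unit of `H ⊗ H^*`. -/
def oneX : X k H := 1 ⊗ₜ (Coalgebra.counit : Module.Dual k H)

/-- Counit of `H ⊗ H^*`. -/
def εX : X k H →ₗ[k] k := LinearMap.mul' k k ∘ₗ map Coalgebra.counit (εD k H)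

variable [FiniteDimensional k H]

/-- Comultiplication of `H^*` (for finite dimensional `H`): dual of multiplication. -/
def ΔD : Module.Dual k H →ₗ[k] Module.Dual k H ⊗[k] Module.Dual k H :=
  (TensorProduct.dualDistribEquiv k H H).symm.toLinearMap ∘ₗ (LinearMap.mul' k H).dualMap

/-- Comultiplication of the tensor product bialgebra `H ⊗ H^*`. -/
def ΔX : X k H →ₗ[k] X k H ⊗[k] X k H :=
  (tensorTensorTensorComm k H H (Module.Dual k H) (Module.Dual k H)).toLinearMap ∘ₗ
    map Coalgebra.comul (ΔD k H)

/-- The canonical element `∑ hᵢ ⊗ hⁱ ∈ H ⊗ H^*` (dual bases). -/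
def canel : H ⊗[k] Module.Dual k H := coevaluation k H 1

end YDL

end
namespace YDL

noncomputable section
open TensorProduct LinearMap Module

variable (k : Type) [Field k] (H : Type) [Ring H] [Bialgebra k H]
variable (M N P : Type) [AddCommGroup M] [Module k M] [AddCommGroup N] [Module k N]
  [AddCommGroup P] [Module k P]

/-- Data of a module-comodule structure on `M` over `H ⊗ H^*`. -/
structure YDData where
  act : X k H ⊗[k] M →ₗ[k] M
  coact : M →ₗ[k] X k H ⊗[k] M

variable {k H M N P}

/-- `M` is a left `H ⊗ H^*`-module (stated on pure tensors, which span `H ⊗ H^*`). -/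
structure IsXMod (E : YDData k H M) : Prop where
  one_act : ∀ m : M, E.act (oneX k H ⊗ₜ m) = m
  mul_act : ∀ (h h' : H) (f f' : Module.Dual k H) (m : M),
    E.act (((h * h') ⊗ₜ convL k H (f ⊗ₜ f')) ⊗ₜ m)
      = E.act ((h ⊗ₜ f) ⊗ₜ E.act ((h' ⊗ₜ f') ⊗ₜ m))

variable [FiniteDimensional k H]

/-- `M` is a left `H ⊗ H^*`-comodule. -/
structure IsXCom (E : YDData k H M) : Prop where
  coassoc : (TensorProduct.assoc k (X k H) (X k H) M).toLinearMap ∘ₗ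
      map (ΔX k H) LinearMap.id ∘ₗ E.coact = map LinearMap.id E.coact ∘ₗ E.coact
  counit : (TensorProduct.lid k M).toLinearMap ∘ₗ map (εX k H) LinearMap.id ∘ₗ E.coact
      = LinearMap.id

/-- The left-left Yetter-Drinfeld compatibility over `H ⊗ H^*`:
`(x₁·m)₍₋₁₎x₂ ⊗ (x₁·m)₍₀₎ = x₁m₍₋₁₎ ⊗ x₂·m₍₀₎`, as maps `(H ⊗ H^*) ⊗ M → (H ⊗ H^*) ⊗ M`. -/
def CondYD (E : YDData k H M) : Prop :=
  map (μX k H ∘ₗ (TensorProduct.comm k (X k H) (X k H)).toLinearMap) LinearMap.id ∘ₗ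
    (TensorProduct.assoc k (X k H) (X k H) M).symm.toLinearMap ∘ₗ
    map LinearMap.id (E.coact ∘ₗ E.act) ∘ₗ
    (TensorProduct.assoc k (X k H) (X k H) M).toLinearMap ∘ₗ
    map ((TensorProduct.comm k (X k H) (X k H)).toLinearMap ∘ₗ ΔX k H) LinearMap.id
  = map (μX k H) E.act ∘ₗ
    (tensorTensorTensorComm k (X k H) (X k H) (X k H) M).toLinearMap ∘ₗ map (ΔX k H) E.coact

/-- `M` is a left-left Yetter-Drinfeld module over `H ⊗ H^*`. -/
structure IsYD (E : YDData k H M) : Prop where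
  xmod : IsXMod E
  xcom : IsXCom E
  yd : CondYD E

/-! ### The functor `F : 𝓛𝓡(H) → ᴴ⊗ᴴ*YD` -/

/-- `f ⊗ m ↦ ⟨f, m₍₁₎⟩ m₍₀₎`, built from a right coaction `cR`. -/
def evR (cR : M →ₗ[k] M ⊗[k] H) : Module.Dual k H ⊗[k] M →ₗ[k] M :=
  (TensorProduct.lid k M).toLinearMap ∘ₗ map (contractLeft k H) LinearMap.id ∘ₗ
    (TensorProduct.assoc k (Module.Dual k H) H M).symm.toLinearMap ∘ₗ
    map LinearMap.id ((TensorProduct.comm k M H).toLinearMap ∘ₗ cR)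

/-- The `H ⊗ H^*`-action `(h ⊗ f) · m = ⟨f, m₍₁₎⟩ h · m₍₀₎` (formula (2.1)). -/
def Fact (D : LRData k H M) : X k H ⊗[k] M →ₗ[k] M :=
  D.aL ∘ₗ map LinearMap.id (evR D.cR) ∘ₗ
    (TensorProduct.assoc k H (Module.Dual k H) M).toLinearMap

/-- `m ↦ ∑ hⁱ ⊗ m · hᵢ`, built from a right action `aR`. -/
def insD (aR : M ⊗[k] H →ₗ[k] M) : M →ₗ[k] Module.Dual k H ⊗[k] M :=
  map LinearMap.id (aR ∘ₗ (TensorProduct.comm k H M).toLinearMap) ∘ₗ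
    (TensorProduct.assoc k (Module.Dual k H) H M).toLinearMap ∘ₗ
    TensorProduct.mk k (Module.Dual k H ⊗[k] H) M
      ((TensorProduct.comm k H (Module.Dual k H)) (canel k H))

/-- The `H ⊗ H^*`-coaction `ρ(m) = ∑ m₍₋₁₎ ⊗ hⁱ ⊗ m₍₀₎ · hᵢ` (formula (2.2)). -/
def Fco (D : LRData k H M) : M →ₗ[k] X k H ⊗[k] M :=
  (TensorProduct.assoc k H (Module.Dual k H) M).symm.toLinearMap ∘ₗ
    map LinearMap.id (insD D.aR) ∘ₗ D.cL

/-- The functor `F` on objects. -/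
def Fdata (D : LRData k H M) : YDData k H M := ⟨Fact D, Fco D⟩

/-! ### The functor `G : ᴴ⊗ᴴ*YD → 𝓛𝓡(H)` -/

variable (k H)

/-- `h ↦ h ⊗ ε`. -/
def ιH : H →ₗ[k] X k H :=
  (TensorProduct.mk k H (Module.Dual k H)).flip (Coalgebra.counit : Module.Dual k H)

/-- `f ↦ 1 ⊗ f`. -/
def ιD : Module.Dual k H →ₗ[k] X k H := TensorProduct.mk k H (Module.Dual k H) 1

/-- `h ⊗ f ↦ ε*(f) h`. -/
def πH : X k H →ₗ[k] H := (TensorProduct.rid k H).toLinearMap ∘ₗ map LinearMap.id (εD k H)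

/-- `(h ⊗ f) ⊗ h' ↦ ε(h)⟨f, h'⟩`. -/
def ξX : X k H ⊗[k] H →ₗ[k] k :=
  LinearMap.mul' k k ∘ₗ map Coalgebra.counit (contractLeft k H) ∘ₗ
    (TensorProduct.assoc k H (Module.Dual k H) H).toLinearMap

variable {k H}

/-- The restricted left `H`-action `h · m = (h ⊗ ε) · m`. -/
def gL (A : X k H ⊗[k] M →ₗ[k] M) : H ⊗[k] M →ₗ[k] M := A ∘ₗ map (ιH k H) LinearMap.id

/-- The right `H`-action `m · h = ⟨(ε ⊗ id) m₍₋₁₎, h⟩ m₍₀₎`. -/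
def gR (C : M →ₗ[k] X k H ⊗[k] M) : M ⊗[k] H →ₗ[k] M :=
  (TensorProduct.lid k M).toLinearMap ∘ₗ map (ξX k H) LinearMap.id ∘ₗ
    (TensorProduct.assoc k (X k H) H M).symm.toLinearMap ∘ₗ
    map LinearMap.id (TensorProduct.comm k M H).toLinearMap ∘ₗ
    (TensorProduct.assoc k (X k H) M H).toLinearMap ∘ₗ map C LinearMap.id

/-- The left `H`-coaction `ρ_L(m) = (id ⊗ ε*)(m₍₋₁₎) ⊗ m₍₀₎`. -/
def gcL (C : M →ₗ[k] X k H ⊗[k] M) : M →ₗ[k] H ⊗[k] M := map (πH k H) LinearMap.id ∘ₗ C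

/-- The right `H`-coaction `ρ_R(m) = ∑ (1 ⊗ hⁱ) · m ⊗ hᵢ`. -/
def gcR (A : X k H ⊗[k] M →ₗ[k] M) : M →ₗ[k] M ⊗[k] H :=
  map (A ∘ₗ map (ιD k H) LinearMap.id) LinearMap.id ∘ₗ
    (TensorProduct.assoc k (Module.Dual k H) M H).symm.toLinearMap ∘ₗ
    map LinearMap.id (TensorProduct.comm k H M).toLinearMap ∘ₗ
    (TensorProduct.assoc k (Module.Dual k H) H M).toLinearMap ∘ₗ
    map (TensorProduct.comm k H (Module.Dual k H)).toLinearMap LinearMap.id ∘ₗ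
    TensorProduct.mk k (H ⊗[k] Module.Dual k H) M (canel k H)

/-- The functor `G` on objects. -/
def Gdata (E : YDData k H M) : LRData k H M :=
  ⟨gL E.act, gR E.coact, gcL E.coact, gcR E.act⟩

end

end YDL
namespace YDL

noncomputable section
open TensorProduct LinearMap Module

variable {k : Type} [Field k] {H : Type} [Ring H] [Bialgebra k H]
variable {M N P : Type} [AddCommGroup M] [Module k M] [AddCommGroup N] [Module k N]
  [AddCommGroup P] [Module k P]

/-- The tensor product of two Yetter-Drinfeld-Long bimodule structures, with diagonal
actions and codiagonal coactions. -/
def tensorLR (D : LRData k H M) (D' : LRData k H N) : LRData k H (M ⊗[k] N) where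
  aL := map D.aL D'.aL ∘ₗ (tensorTensorTensorComm k H H M N).toLinearMap ∘ₗ
    map Coalgebra.comul LinearMap.id
  aR := map D.aR D'.aR ∘ₗ (tensorTensorTensorComm k M N H H).toLinearMap ∘ₗ
    map LinearMap.id Coalgebra.comul
  cL := map (LinearMap.mul' k H) LinearMap.id ∘ₗ
    (tensorTensorTensorComm k H M H N).toLinearMap ∘ₗ map D.cL D'.cL
  cR := map LinearMap.id (LinearMap.mul' k H) ∘ₗ
    (tensorTensorTensorComm k M H N H).toLinearMap ∘ₗ map D.cR D'.cR

variable [FiniteDimensional k H]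

/-- The tensor product of two Yetter-Drinfeld module structures over `H ⊗ H^*`. -/
def tensorYD (E : YDData k H M) (E' : YDData k H N) : YDData k H (M ⊗[k] N) where
  act := map E.act E'.act ∘ₗ (tensorTensorTensorComm k (X k H) (X k H) M N).toLinearMap ∘ₗ
    map (ΔX k H) LinearMap.id
  coact := map (μX k H) LinearMap.id ∘ₗ
    (tensorTensorTensorComm k (X k H) M (X k H) N).toLinearMap ∘ₗ map E.coact E'.coact

/-- A linear map `φ : M → N` is a morphism of Yetter-Drinfeld-Long bimodules
(`H`-bilinear and `H`-bicolinear). -/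
def LRHom (D : LRData k H M) (D' : LRData k H N) (φ : M →ₗ[k] N) : Prop :=
  φ ∘ₗ D.aL = D'.aL ∘ₗ map LinearMap.id φ ∧
  φ ∘ₗ D.aR = D'.aR ∘ₗ map φ LinearMap.id ∧
  D'.cL ∘ₗ φ = map LinearMap.id φ ∘ₗ D.cL ∧
  D'.cR ∘ₗ φ = map φ LinearMap.id ∘ₗ D.cR

/-- A linear map `φ : M → N` is a morphism of Yetter-Drinfeld modules over `H ⊗ H^*`
(`H ⊗ H^*`-linear and colinear). -/
def YDHom (E : YDData k H M) (E' : YDData k H N) (φ : M →ₗ[k] N) : Prop :=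
  φ ∘ₗ E.act = E'.act ∘ₗ map LinearMap.id φ ∧
  E'.coact ∘ₗ φ = map LinearMap.id φ ∘ₗ E.coact

/-- The braiding of `𝓛𝓡(H)`: `m ⊗ n ↦ m₍₋₁₎·n₍₀₎ ⊗ m₍₀₎·n₍₁₎`. -/
def cLR (D : LRData k H M) (D' : LRData k H N) : M ⊗[k] N →ₗ[k] N ⊗[k] M :=
  map D'.aL D.aR ∘ₗ (tensorTensorTensorComm k H M N H).toLinearMap ∘ₗ map D.cL D'.cR

/-- The inverse braiding of `𝓛𝓡(H)` (`T` is the inverse of the antipode):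
`n ⊗ m ↦ m₍₀₎·S⁻¹(n₍₁₎) ⊗ S⁻¹(m₍₋₁₎)·n₍₀₎`. -/
def cLRinv (D : LRData k H M) (D' : LRData k H N) (T : H →ₗ[k] H) :
    N ⊗[k] M →ₗ[k] M ⊗[k] N :=
  map D.aR D'.aL ∘ₗ
    (TensorProduct.comm k (H ⊗[k] N) (M ⊗[k] H)).toLinearMap ∘ₗ
    (tensorTensorTensorComm k H M N H).toLinearMap ∘ₗ
    (TensorProduct.comm k (N ⊗[k] H) (H ⊗[k] M)).toLinearMap ∘ₗ
    map (map LinearMap.id T) (map T LinearMap.id) ∘ₗ map D'.cR D.cL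

/-- The braiding of the Yetter-Drinfeld category over `H ⊗ H^*`:
`m ⊗ n ↦ m₍₋₁₎·n ⊗ m₍₀₎`, built from the coaction on `M` and the action on `N`. -/
def cYD (C : M →ₗ[k] X k H ⊗[k] M) (A' : X k H ⊗[k] N →ₗ[k] N) : M ⊗[k] N →ₗ[k] N ⊗[k] M :=
  map A' LinearMap.id ∘ₗ (TensorProduct.assoc k (X k H) N M).symm.toLinearMap ∘ₗ
    map LinearMap.id (TensorProduct.comm k M N).toLinearMap ∘ₗ
    (TensorProduct.assoc k (X k H) M N).toLinearMap ∘ₗ map C LinearMap.id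

end

end YDL

/-! Restrict along `ιH : h ↦ h ⊗ ε` and project along `πH = id ⊗ ε*`. Since `ε` is grouplike
in `H^*`, `Δ(ιH h) = (ιH ⊗ ιH)(Δh)`, and since `ε*` is multiplicative for the convolution
product, `πH(ιH a · x · ιH b) = a πH(x) b`. Hence applying `πH ⊗ id` to the Yetter-Drinfeld
condition over `H ⊗ H^*` at `ιH h ⊗ m` yields exactly the condition over `H` at `h ⊗ m`. -/

namespace YDL
open TensorProduct LinearMap Module

section

variable {k : Type} [Field k] {H : Type} [Ring H] [Bialgebra k H]
variable {M : Type} [AddCommGroup M] [Module k M]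

lemma ιH_apply (h : H) : ιH k H h = h ⊗ₜ[k] (Coalgebra.counit : Module.Dual k H) := rfl

lemma πH_tmul (h : H) (f : Module.Dual k H) : πH k H (h ⊗ₜ[k] f) = f 1 • h := by
  simp [πH, εD]

lemma μX_tmul (h h' : H) (f f' : Module.Dual k H) :
    μX k H ((h ⊗ₜ[k] f) ⊗ₜ[k] (h' ⊗ₜ[k] f')) = (h * h') ⊗ₜ[k] convL k H (f ⊗ₜ[k] f') := by
  simp [μX]

lemma convL_tmul_apply_one (f f' : Module.Dual k H) :
    convL k H (f ⊗ₜ[k] f') 1 = f 1 * f' 1 := by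
  simp [convL, Bialgebra.comul_one, Algebra.TensorProduct.one_def]

lemma πH_μX_tmul_ιH (x : X k H) (b : H) :
    πH k H (μX k H (x ⊗ₜ[k] ιH k H b)) = πH k H x * b := by
  induction x using TensorProduct.induction_on with
  | zero => simp
  | tmul c f => simp [ιH_apply, μX_tmul, πH_tmul, convL_tmul_apply_one]
  | add x y hx hy => simp only [add_tmul, map_add, hx, hy, add_mul]

lemma πH_μX_ιH_tmul (a : H) (x : X k H) :
    πH k H (μX k H (ιH k H a ⊗ₜ[k] x)) = a * πH k H x := by
  induction x using TensorProduct.induction_on with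
  | zero => simp
  | tmul c f => simp [ιH_apply, μX_tmul, πH_tmul, convL_tmul_apply_one]
  | add x y hx hy => simp only [tmul_add, map_add, hx, hy, mul_add]

lemma map_πH_comp_mulRight_ιH :
    map (πH k H) LinearMap.id ∘ₗ
        map (μX k H ∘ₗ (TensorProduct.comm k (X k H) (X k H)).toLinearMap) LinearMap.id ∘ₗ
        (TensorProduct.assoc k (X k H) (X k H) M).symm.toLinearMap ∘ₗ map (ιH k H) LinearMap.id
      = map (LinearMap.mul' k H ∘ₗ (TensorProduct.comm k H H).toLinearMap) LinearMap.id ∘ₗ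
        (TensorProduct.assoc k H H M).symm.toLinearMap ∘ₗ
        map LinearMap.id (map (πH k H) (LinearMap.id : M →ₗ[k] M)) := by
  refine TensorProduct.ext_threefold' fun b x m => ?_
  simp [πH_μX_tmul_ιH]

lemma map_πH_comp_mulLeft_ιH (A : X k H ⊗[k] M →ₗ[k] M) :
    map (πH k H) LinearMap.id ∘ₗ map (μX k H) A ∘ₗ
        (tensorTensorTensorComm k (X k H) (X k H) (X k H) M).toLinearMap ∘ₗ
        map (map (ιH k H) (ιH k H)) LinearMap.id
      = map (LinearMap.mul' k H) (gL A) ∘ₗ (tensorTensorTensorComm k H H H M).toLinearMap ∘ₗ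
        map LinearMap.id (map (πH k H) LinearMap.id) := by
  refine TensorProduct.ext_fourfold' fun a b x m => ?_
  simp [πH_μX_ιH_tmul, gL]

variable [FiniteDimensional k H]

lemma ΔD_counit : ΔD k H (Coalgebra.counit : Module.Dual k H)
    = (Coalgebra.counit : Module.Dual k H) ⊗ₜ[k] (Coalgebra.counit : Module.Dual k H) := by
  rw [ΔD, LinearMap.comp_apply, LinearEquiv.coe_coe, LinearEquiv.symm_apply_eq]
  refine TensorProduct.ext' fun a b => ?_
  simp [TensorProduct.dualDistribEquiv]

lemma ΔX_ιH (h : H) : ΔX k H (ιH k H h) = map (ιH k H) (ιH k H) (Coalgebra.comul h) := by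
  rw [ΔX, LinearMap.comp_apply, LinearEquiv.coe_coe, ιH_apply, map_tmul, ΔD_counit]
  induction Coalgebra.comul (R := k) h using TensorProduct.induction_on with
  | zero => simp
  | tmul a b => simp [ιH_apply]
  | add x y hx hy => simp only [add_tmul, map_add, hx, hy]

lemma cond1Lhs_Gdata (E : YDData k H M) :
    map (LinearMap.mul' k H ∘ₗ (TensorProduct.comm k H H).toLinearMap) LinearMap.id ∘ₗ
      (TensorProduct.assoc k H H M).symm.toLinearMap ∘ₗ
      map LinearMap.id ((Gdata E).cL ∘ₗ (Gdata E).aL) ∘ₗ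
      (TensorProduct.assoc k H H M).toLinearMap ∘ₗ
      map ((TensorProduct.comm k H H).toLinearMap ∘ₗ Coalgebra.comul) LinearMap.id
    = map (πH k H) LinearMap.id ∘ₗ
      (map (μX k H ∘ₗ (TensorProduct.comm k (X k H) (X k H)).toLinearMap) LinearMap.id ∘ₗ
        (TensorProduct.assoc k (X k H) (X k H) M).symm.toLinearMap ∘ₗ
        map LinearMap.id (E.coact ∘ₗ E.act) ∘ₗ
        (TensorProduct.assoc k (X k H) (X k H) M).toLinearMap ∘ₗ
        map ((TensorProduct.comm k (X k H) (X k H)).toLinearMap ∘ₗ ΔX k H) LinearMap.id) ∘ₗ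
      map (ιH k H) LinearMap.id := by
  refine TensorProduct.ext' fun h m => ?_
  simp only [LinearMap.comp_apply, map_tmul, LinearMap.id_apply, ΔX_ιH]
  induction Coalgebra.comul (R := k) h using TensorProduct.induction_on with
  | zero => simp
  | add x y hx hy => simp only [map_add, add_tmul, hx, hy]
  | tmul a b =>
    have hb := congr($(map_πH_comp_mulRight_ιH (k := k) (H := H) (M := M))
      (b ⊗ₜ E.coact (E.act (ιH k H a ⊗ₜ m))))
    simpa [Gdata, gL, gcL] using hb.symm

lemma cond1Rhs_Gdata (E : YDData k H M) :
    map (LinearMap.mul' k H) (Gdata E).aL ∘ₗ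
      (tensorTensorTensorComm k H H H M).toLinearMap ∘ₗ map Coalgebra.comul (Gdata E).cL
    = map (πH k H) LinearMap.id ∘ₗ
      (map (μX k H) E.act ∘ₗ
        (tensorTensorTensorComm k (X k H) (X k H) (X k H) M).toLinearMap ∘ₗ
        map (ΔX k H) E.coact) ∘ₗ
      map (ιH k H) LinearMap.id := by
  refine TensorProduct.ext' fun h m => ?_
  have hΔ := congr($(map_πH_comp_mulLeft_ιH E.act) (Coalgebra.comul h ⊗ₜ E.coact m))
  simpa [Gdata, gcL, ΔX_ιH] using hΔ.symm

end

/-- the induced structures on a Yetter-Drinfeld module over `H ⊗ H^*`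
satisfy the left-left Yetter-Drinfeld compatibility over `H`. -/
theorem statement5 {k : Type} [Field k] {H : Type} [Ring H] [Bialgebra k H]
    [FiniteDimensional k H] {M : Type} [AddCommGroup M] [Module k M]
    (E : YDData k H M) (hE : IsYD E) :
    Cond1 (Gdata E) := by
  rw [Cond1, cond1Lhs_Gdata, cond1Rhs_Gdata, hE.yd]

end YDL
end

section
/- Let $M$ be a left-left Yetter-Drinfeld module over the tensor product bialgebra $H\otimes H^*$, with induced structures as above. Then the right-right Yetter-Drinfeld compatibility over $H$ holds: $(m\cdot h_2)_{\langle 0\rangle}\otimes h_1(m\cdot h_2)_{\langle 1\rangle} = m_{\langle 0\rangle}\cdot h_1\otimes m_{\langle 1\rangle}h_2$ for all $h\in H$, $m\in M$. -/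
/- Common setup: Yetter-Drinfeld-Long bimodules over a bialgebra `H`, and
Yetter-Drinfeld modules over the tensor product bialgebra `H ⊗ H^*`. -/

open TensorProduct LinearMap Module

namespace YDL
open TensorProduct LinearMap Module

/-! Testing both sides of the right-right condition against `φ ∈ H^*` turns `ρ_R` into the
action of `1 ⊗ φ`, because `∑ φ(hᵢ) hⁱ = φ`. The tested sides become
`∑ (1 ⊗ φ(h₁ ·))·(m·h₂)` and `∑ ((1 ⊗ φ(· h₂))·m)·h₁`. These are what the left-left
Yetter-Drinfeld condition at `x = 1 ⊗ φ` gives after pairing its `H ⊗ H^*`-leg with `h`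
through `ε ⊗ id`: this pairing is multiplicative along `Δh`, and
`Δ(1 ⊗ φ) = (1 ⊗ φ₁) ⊗ (1 ⊗ φ₂)` with `φ₁(a) φ₂(b) = φ(ab)`. -/

theorem _root_.TensorProduct.ext_lTensor_dual {R M N : Type*} [CommRing R] [AddCommGroup M]
    [Module R M] [AddCommGroup N] [Module R N] [Module.Free R N] {t t' : M ⊗[R] N}
    (h : ∀ φ : Dual R N, φ.lTensor M t = φ.lTensor M t') : t = t' := by
  apply (equivFinsuppOfBasisRight (Module.Free.chooseBasis R N)).injective
  ext i
  simp only [equivFinsuppOfBasisRight_apply, h]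

section

variable {k : Type} [Field k] {H : Type} [Ring H] [Bialgebra k H]
  {M : Type} [AddCommGroup M] [Module k M] {ι : Type*}

theorem rid_lTensor_cond3_lhs (aR : M ⊗[k] H →ₗ[k] M) (cR : M →ₗ[k] M ⊗[k] H)
    (φ : Dual k H) (m : M) {h : H} (repr : Coalgebra.Repr k h ι) :
    TensorProduct.rid k M (φ.lTensor M
      ((map LinearMap.id (mul' k H ∘ₗ (TensorProduct.comm k H H).toLinearMap))
        ((TensorProduct.assoc k M H H) ((map (cR ∘ₗ aR) LinearMap.id)
          ((TensorProduct.assoc k M H H).symm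
            (m ⊗ₜ[k] (TensorProduct.comm k H H) (Coalgebra.comul h)))))))
      = ∑ i ∈ repr.index, TensorProduct.rid k M
          ((φ ∘ₗ mulLeft k (repr.left i)).lTensor M (cR (aR (m ⊗ₜ repr.right i)))) := by
  have hmul (a : H) : map LinearMap.id (mul' k H ∘ₗ (TensorProduct.comm k H H).toLinearMap)
      ∘ₗ (TensorProduct.assoc k M H H).toLinearMap ∘ₗ (mk k (M ⊗[k] H) H).flip a
      = (mulLeft k a).lTensor M := TensorProduct.ext' fun n b => by simp
  simp only [← repr.eq, tmul_sum, map_sum, comm_tmul, assoc_symm_tmul, map_tmul, coe_comp,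
    Function.comp_apply, id_coe, id_eq, lTensor_comp]
  exact Finset.sum_congr rfl fun i _ => by rw [← hmul]; rfl

theorem rid_lTensor_cond3_rhs (aR : M ⊗[k] H →ₗ[k] M) (cR : M →ₗ[k] M ⊗[k] H)
    (φ : Dual k H) (m : M) {h : H} (repr : Coalgebra.Repr k h ι) :
    TensorProduct.rid k M (φ.lTensor M
      ((map aR (mul' k H)) ((tensorTensorTensorComm k M H H H) (cR m ⊗ₜ Coalgebra.comul h))))
      = ∑ i ∈ repr.index, aR (TensorProduct.rid k M
          ((φ ∘ₗ mulRight k (repr.right i)).lTensor M (cR m)) ⊗ₜ repr.left i) := by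
  have hmul (a b : H) : TensorProduct.rid k M ∘ₗ φ.lTensor M ∘ₗ map aR (mul' k H) ∘ₗ
      (tensorTensorTensorComm k M H H H).toLinearMap ∘ₗ (mk k (M ⊗[k] H) (H ⊗[k] H)).flip (a ⊗ₜ b)
      = aR ∘ₗ (mk k M H).flip a ∘ₗ TensorProduct.rid k M ∘ₗ (φ ∘ₗ mulRight k b).lTensor M :=
    TensorProduct.ext' fun n c => by simp
  simp only [← repr.eq, tmul_sum, map_sum]
  exact Finset.sum_congr rfl fun i _ => LinearMap.congr_fun (hmul _ _) (cR m)

theorem rid_lTensor_gcR [FiniteDimensional k H] (A : X k H ⊗[k] M →ₗ[k] M) (φ : Dual k H)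
    (m : M) : TensorProduct.rid k M (φ.lTensor M (gcR A m)) = A (ιD k H φ ⊗ₜ m) := by
  conv_rhs => rw [← (Basis.ofVectorSpace k H).sum_dual_apply_smul_coord φ]
  simp [gcR, canel, coevaluation_apply_one, map_sum, ιD, sum_tmul, ← smul_tmul']

variable (k H) in
def ξAt (h : H) : X k H →ₗ[k] k := ξX k H ∘ₗ (mk k (X k H) H).flip h

@[simp]
theorem ξAt_tmul (h a : H) (f : Dual k H) :
    ξAt k H h (a ⊗ₜ f) = Coalgebra.counit a * f h := by
  simp [ξAt, ξX]

theorem ξAt_μX {h : H} (repr : Coalgebra.Repr k h ι) (x y : X k H) :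
    ξAt k H h (μX k H (x ⊗ₜ y))
      = ∑ i ∈ repr.index, ξAt k H (repr.left i) x * ξAt k H (repr.right i) y := by
  induction x using TensorProduct.induction_on with
  | zero => simp
  | add x x' hx hx' => simp [add_tmul, hx, hx', add_mul, Finset.sum_add_distrib]
  | tmul a f =>
    induction y using TensorProduct.induction_on with
    | zero => simp
    | add y y' hy hy' => simp [tmul_add, hy, hy', mul_add, Finset.sum_add_distrib]
    | tmul b g =>
      simp only [μX, convL, LinearEquiv.coe_coe, coe_comp, Function.comp_apply,
        tensorTensorTensorComm_tmul, map_tmul, mul'_apply, ξAt_tmul, Bialgebra.counit_mul,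
        dualMap_apply, ← repr.eq, map_sum, dualDistrib_apply, Finset.mul_sum]
      exact Finset.sum_congr rfl fun _ _ => by ring

variable (H) in
def evalAt (h : H) : X k H ⊗[k] M →ₗ[k] M := TensorProduct.lid k M ∘ₗ (ξAt k H h).rTensor M

@[simp]
theorem evalAt_tmul (h : H) (x : X k H) (n : M) : evalAt H h (x ⊗ₜ n) = ξAt k H h x • n := by
  simp [evalAt]

theorem gR_tmul (C : M →ₗ[k] X k H ⊗[k] M) (m : M) (h : H) :
    gR C (m ⊗ₜ h) = evalAt H h (C m) := by
  simp only [gR, coe_comp, LinearEquiv.coe_coe, Function.comp_apply, map_tmul, id_coe, id_eq]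
  induction C m using TensorProduct.induction_on with
  | zero => simp
  | tmul x n => simp [ξAt]
  | add z z' hz hz' => simp only [add_tmul, map_add, hz, hz']

theorem evalAt_mul_right {h : H} (repr : Coalgebra.Repr k h ι) (y : X k H) (z : X k H ⊗[k] M) :
    evalAt H h ((map (μX k H ∘ₗ (TensorProduct.comm k (X k H) (X k H)).toLinearMap)
        LinearMap.id) ((TensorProduct.assoc k (X k H) (X k H) M).symm (y ⊗ₜ z)))
      = ∑ i ∈ repr.index, ξAt k H (repr.right i) y • evalAt H (repr.left i) z := by
  induction z using TensorProduct.induction_on with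
  | zero => simp
  | tmul x n => simp [ξAt_μX repr, Finset.sum_smul, mul_smul, smul_comm (ξAt k H _ x)]
  | add z z' hz hz' => simp only [tmul_add, map_add, hz, hz', smul_add, Finset.sum_add_distrib]

theorem evalAt_mul_left_act {h : H} (repr : Coalgebra.Repr k h ι) (A : X k H ⊗[k] M →ₗ[k] M)
    (y₁ y₂ : X k H) (z : X k H ⊗[k] M) :
    evalAt H h (map (μX k H) A (tensorTensorTensorComm k (X k H) (X k H) (X k H) M
        ((y₁ ⊗ₜ y₂) ⊗ₜ z)))
      = ∑ i ∈ repr.index, ξAt k H (repr.left i) y₁ • A (y₂ ⊗ₜ evalAt H (repr.right i) z) := by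
  induction z using TensorProduct.induction_on with
  | zero => simp
  | tmul x n => simp [ξAt_μX repr, Finset.sum_smul, mul_smul]
  | add z z' hz hz' => simp only [tmul_add, map_add, hz, hz', smul_add, Finset.sum_add_distrib]

variable [FiniteDimensional k H]

theorem dualDistrib_ΔD (φ : Dual k H) (a b : H) :
    dualDistrib k H H (ΔD k H φ) (a ⊗ₜ b) = φ (a * b) :=
  congr($((dualDistribEquiv k H H).apply_symm_apply ((mul' k H).dualMap φ)) (a ⊗ₜ b))

theorem ΔX_one_tmul (φ : Dual k H) :
    ΔX k H (1 ⊗ₜ φ) = map (ιD k H) (ιD k H) (ΔD k H φ) := by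
  simp only [ΔX, coe_comp, LinearEquiv.coe_coe, Function.comp_apply, map_tmul,
    Bialgebra.comul_one, Algebra.TensorProduct.one_def]
  induction ΔD k H φ using TensorProduct.induction_on with
  | zero => simp
  | tmul f g => simp [ιD]
  | add z z' hz hz' => simp only [tmul_add, map_add, hz, hz']

theorem CondYD.sum_act_gR {E : YDData k H M} (hE : CondYD E) (φ : Dual k H) (m : M) {h : H}
    (repr : Coalgebra.Repr k h ι) :
    ∑ i ∈ repr.index,
        E.act (ιD k H (φ ∘ₗ mulLeft k (repr.left i)) ⊗ₜ gR E.coact (m ⊗ₜ repr.right i))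
      = ∑ i ∈ repr.index,
        gR E.coact (E.act (ιD k H (φ ∘ₗ mulRight k (repr.right i)) ⊗ₜ m) ⊗ₜ repr.left i) := by
  obtain ⟨S, hS⟩ := TensorProduct.exists_finset (ΔD k H φ)
  have hyd := congr(evalAt H h $(LinearMap.congr_fun hE (ιD k H φ ⊗ₜ m)))
  simp only [coe_comp, LinearEquiv.coe_coe, Function.comp_apply, map_tmul, id_coe, id_eq,
    ιD, mk_apply, ΔX_one_tmul, hS, map_sum, sum_tmul, comm_tmul, assoc_tmul,
    evalAt_mul_right repr, evalAt_mul_left_act repr, ξAt_tmul, Bialgebra.counit_one,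
    one_mul] at hyd
  have hl (a : H) : φ ∘ₗ mulLeft k a = ∑ p ∈ S, p.1 a • p.2 := by
    ext b
    simp [← dualDistrib_ΔD, hS]
  have hr (b : H) : φ ∘ₗ mulRight k b = ∑ p ∈ S, p.2 b • p.1 := by
    ext a
    simp [← dualDistrib_ΔD, hS, mul_comm]
  simp only [hl, hr, gR_tmul, ιD, mk_apply, sum_tmul, ← smul_tmul', map_sum, map_smul]
  rw [Finset.sum_comm, hyd.symm, Finset.sum_comm]

end

/-- the induced structures on a Yetter-Drinfeld module over `H ⊗ H^*`
satisfy the right-right Yetter-Drinfeld compatibility over `H`. -/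
theorem statement7 {k : Type} [Field k] {H : Type} [Ring H] [Bialgebra k H]
    [FiniteDimensional k H] {M : Type} [AddCommGroup M] [Module k M]
    (E : YDData k H M) (hE : IsYD E) :
    Cond3 (Gdata E) := by
  refine TensorProduct.ext' fun m h => TensorProduct.ext_lTensor_dual fun φ => ?_
  apply (TensorProduct.rid k M).injective
  simp only [Gdata, coe_comp, LinearEquiv.coe_coe, Function.comp_apply, map_tmul, id_coe, id_eq]
  let repr := Coalgebra.Repr.arbitrary k h
  rw [rid_lTensor_cond3_lhs _ _ _ _ repr, rid_lTensor_cond3_rhs _ _ _ _ repr]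
  simp only [rid_lTensor_gcR]
  exact hE.yd.sum_act_gR φ m repr

end YDL
end
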